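/- arXiv:2302.11128 — 11 statements merged into one kernel-verified Lean document; each statement's English description precedes it below -/
import Mathlib

section
/- (Proposition 1, equilibrium characterization) Suppose w ∈ (0,1) and a, b ∈ (0,1) satisfy the ex-post optimal investment conditions p1(a)(1−w) = k and p0(b)(1−w) = k together with the rent-continuity (incentive compatibility) conditions a(1−q1)(w−c) − (1−a)q0·c = 0 and b(1−q1)(w−c) − (1−b)q0·c = b·w − c. Then w = c/(k+c), a = q0(k+c)/((1−q1)(1−k−c)+q0(k+c)), and b = (1−q0)(k+c)/(q1+(1−q1−q0)(k+c)). -/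
/-!
The rent-continuity condition for `a` says `p1(a) w = c`, while ex-post optimality says
`p1(a) (1 - w) = k`; adding them gives `p1(a) = k + c`, hence `w = c / (k + c)`. Then
`p0(b) (1 - w) = k = p1(a) (1 - w)` forces `p0(b) = k + c` as well, and inverting Bayes' rule
`θ x / (θ x + (1 - θ) y) = p` gives the cutoffs `a` and `b`.
-/

/-- In the paper's notation `p1 = posterior (1 - q1) q0` and `p0 = posterior q1 (1 - q0)`. -/
noncomputable def posterior (x y θ : ℝ) : ℝ := θ * x / (θ * x + (1 - θ) * y)

lemma mul_add_one_sub_mul_pos {x y θ : ℝ} (hx : 0 < x) (hy : 0 < y) (hθ : θ ∈ Set.Icc 0 1) :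
    0 < θ * x + (1 - θ) * y := by
  obtain ⟨hθ0, hθ1⟩ := hθ
  rcases hθ0.eq_or_lt with rfl | hθ0
  · simpa using hy
  · nlinarith [mul_nonneg (sub_nonneg.2 hθ1) hy.le]

lemma posterior_mul_eq {x y θ w c : ℝ} (hD : θ * x + (1 - θ) * y ≠ 0)
    (h : θ * x * (w - c) - (1 - θ) * y * c = 0) : posterior x y θ * w = c := by
  rw [posterior, div_mul_eq_mul_div, div_eq_iff hD]
  linear_combination h

lemma eq_div_of_posterior_eq {x y θ p : ℝ} (hD : θ * x + (1 - θ) * y ≠ 0)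
    (hE : x * (1 - p) + y * p ≠ 0) (h : posterior x y θ = p) :
    θ = y * p / (x * (1 - p) + y * p) := by
  rw [posterior, div_eq_iff hD] at h
  rw [eq_div_iff hE]
  linear_combination h

theorem stmt_1_general (k c q1 q0 w a b : ℝ)
    (hk : 0 < k) (hc : 0 < c) (hkc : k + c < 1)
    (hq1 : q1 ∈ Set.Ioo (0 : ℝ) (1/2)) (hq0 : q0 ∈ Set.Ioo (0 : ℝ) (1/2))
    (ha : a ∈ Set.Ioo (0 : ℝ) 1) (hb : b ∈ Set.Ioo (0 : ℝ) 1)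
    (hinv1 : a * (1 - q1) / (a * (1 - q1) + (1 - a) * q0) * (1 - w) = k)
    (hinv0 : b * q1 / (b * q1 + (1 - b) * (1 - q0)) * (1 - w) = k)
    (hic1 : a * (1 - q1) * (w - c) - (1 - a) * q0 * c = 0) :
    w = c / (k + c) ∧
    a = q0 * (k + c) / ((1 - q1) * (1 - k - c) + q0 * (k + c)) ∧
    b = (1 - q0) * (k + c) / (q1 + (1 - q1 - q0) * (k + c)) := by
  obtain ⟨hq1, hq1'⟩ := hq1
  obtain ⟨hq0, hq0'⟩ := hq0
  have hkc0 : k + c ∈ Set.Icc 0 1 := ⟨by linarith, hkc.le⟩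
  have hDa := mul_add_one_sub_mul_pos (by linarith : 0 < 1 - q1) hq0 (Set.Ioo_subset_Icc_self ha)
  have hDb := mul_add_one_sub_mul_pos hq1 (by linarith : 0 < 1 - q0) (Set.Ioo_subset_Icc_self hb)
  change posterior (1 - q1) q0 a * (1 - w) = k at hinv1
  change posterior q1 (1 - q0) b * (1 - w) = k at hinv0
  have hrent : posterior (1 - q1) q0 a * w = c := posterior_mul_eq hDa.ne' hic1
  have hpa : posterior (1 - q1) q0 a = k + c := by linear_combination hinv1 + hrent
  have hpb : posterior q1 (1 - q0) b = k + c := by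
    rw [hpa] at hinv1
    have hw1 : 1 - w ≠ 0 := fun h => hk.ne' (by rw [← hinv1, h, mul_zero])
    exact mul_right_cancel₀ hw1 (hinv0.trans hinv1.symm)
  have hEa := mul_add_one_sub_mul_pos hq0 (by linarith : 0 < 1 - q1) hkc0
  have hEb := mul_add_one_sub_mul_pos (by linarith : 0 < 1 - q0) hq1 hkc0
  refine ⟨?_, ?_, ?_⟩
  · rw [eq_div_iff (by linarith), mul_comm, ← hpa, hrent]
  · rw [eq_div_of_posterior_eq hDa.ne' (by linarith) hpa]
    ring
  · rw [eq_div_of_posterior_eq hDb.ne' (by linarith) hpb]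
    ring

/-- Proposition 1 (equilibrium characterization): if `w ∈ (0,1)` and `a, b ∈ (0,1)` satisfy
the ex-post optimal investment conditions `p1(a)(1−w) = k` and `p0(b)(1−w) = k` together with
the rent-continuity (incentive compatibility) conditions, then `w = c/(k+c)` and the cutoffs
`a`, `b` take the closed forms given in the paper. -/
theorem stmt_1 (k c q1 q0 w a b : ℝ)
    (hk : 0 < k) (hc : 0 < c) (hkc : k + c < 1)
    (hq1 : q1 ∈ Set.Ioo (0 : ℝ) (1/2)) (hq0 : q0 ∈ Set.Ioo (0 : ℝ) (1/2))
    (hw : w ∈ Set.Ioo (0 : ℝ) 1)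
    (ha : a ∈ Set.Ioo (0 : ℝ) 1) (hb : b ∈ Set.Ioo (0 : ℝ) 1)
    (hinv1 : a * (1 - q1) / (a * (1 - q1) + (1 - a) * q0) * (1 - w) = k)
    (hinv0 : b * q1 / (b * q1 + (1 - b) * (1 - q0)) * (1 - w) = k)
    (hic1 : a * (1 - q1) * (w - c) - (1 - a) * q0 * c = 0)
    (hic0 : b * (1 - q1) * (w - c) - (1 - b) * q0 * c = b * w - c) :
    w = c / (k + c) ∧
    a = q0 * (k + c) / ((1 - q1) * (1 - k - c) + q0 * (k + c)) ∧
    b = (1 - q0) * (k + c) / (q1 + (1 - q1 - q0) * (k + c)) :=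
  stmt_1_general k c q1 q0 w a b hk hc hkc hq1 hq0 ha hb hinv1 hinv0 hic1
end

section
/- For all q1, q0 ∈ (0, 1/2), the investment cutoffs satisfy 0 < θ1(q1,q0) < θ0(q1,q0) < 1; that is, the no-investment, conditional investment, and unconditional investment zones are all nonempty. -/
/-!
With `m = k + c` the total investment cost, both cutoffs are ratios with positive denominators
`D₁ = (1 - q1) (1 - m) + q0 m` and `D₀ = q1 + (1 - q1 - q0) m`, and two identities settle the ordering:
`(1 - q0) m D₁ - q0 m D₀ = m (1 - m) (1 - q1 - q0)` for the cross-multiplied comparison of `θ1`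
and `θ0`, and `D₀ - (1 - q0) m = q1 (1 - m)` for `θ0 < 1`. Both right-hand sides are positive
as soon as the signals are informative, `q1 + q0 < 1`, which holds for `q1, q0 < 1/2`.
-/

namespace InvestmentCutoff

variable {m q1 q0 : ℝ}

/-- `θ1` as a function of the total cost `m = k + c`. -/
noncomputable def low (m q1 q0 : ℝ) : ℝ := q0 * m / ((1 - q1) * (1 - m) + q0 * m)

/-- `θ0` as a function of the total cost `m = k + c`. -/
noncomputable def high (m q1 q0 : ℝ) : ℝ := (1 - q0) * m / (q1 + (1 - q1 - q0) * m)

lemma low_denom_pos (hm : 0 < m) (hm1 : m < 1) (hq1 : q1 < 1) (hq0 : 0 < q0) :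
    0 < (1 - q1) * (1 - m) + q0 * m := by
  have : 0 < (1 - q1) * (1 - m) := mul_pos (by linarith) (by linarith)
  positivity

lemma high_denom_pos (hm : 0 ≤ m) (hm1 : m < 1) (hq1 : 0 < q1) (hq0 : q0 < 1) :
    0 < q1 + (1 - q1 - q0) * m := by
  have : 0 < q1 * (1 - m) := mul_pos hq1 (by linarith)
  nlinarith

lemma low_pos (hm : 0 < m) (hm1 : m < 1) (hq1 : q1 < 1) (hq0 : 0 < q0) : 0 < low m q1 q0 :=
  div_pos (by positivity) (low_denom_pos hm hm1 hq1 hq0)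

lemma low_lt_high (hm : 0 < m) (hm1 : m < 1) (hq1 : 0 < q1) (hq0 : 0 < q0)
    (hq : q1 + q0 < 1) : low m q1 q0 < high m q1 q0 := by
  have hcross : (1 - q0) * m * ((1 - q1) * (1 - m) + q0 * m) - q0 * m * (q1 + (1 - q1 - q0) * m)
      = m * (1 - m) * (1 - q1 - q0) := by ring
  have : 0 < m * (1 - m) * (1 - q1 - q0) := mul_pos (mul_pos hm (by linarith)) (by linarith)
  rw [low, high, div_lt_div_iff₀ (low_denom_pos hm hm1 (by linarith) hq0)
    (high_denom_pos hm.le hm1 hq1 (by linarith))]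
  linarith

lemma high_lt_one (hm : 0 ≤ m) (hm1 : m < 1) (hq1 : 0 < q1) (hq0 : q0 < 1) :
    high m q1 q0 < 1 := by
  have hgap : q1 + (1 - q1 - q0) * m - (1 - q0) * m = q1 * (1 - m) := by ring
  have : 0 < q1 * (1 - m) := mul_pos hq1 (by linarith)
  rw [high, div_lt_one (high_denom_pos hm hm1 hq1 hq0)]
  linarith

end InvestmentCutoff

open InvestmentCutoff in
/-- For all `q1, q0 ∈ (0, 1/2)`, the investment cutoffs satisfy `0 < θ1 < θ0 < 1`:
the no-investment, conditional investment, and unconditional investment zones are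
all nonempty. -/
theorem stmt_2 (k c : ℝ) (hk : 0 < k) (hc : 0 < c) (hkc : k + c < 1) :
    ∀ q1 ∈ Set.Ioo (0 : ℝ) (1/2), ∀ q0 ∈ Set.Ioo (0 : ℝ) (1/2),
      0 < q0 * (k + c) / ((1 - q1) * (1 - k - c) + q0 * (k + c)) ∧
      q0 * (k + c) / ((1 - q1) * (1 - k - c) + q0 * (k + c)) <
        (1 - q0) * (k + c) / (q1 + (1 - q1 - q0) * (k + c)) ∧
      (1 - q0) * (k + c) / (q1 + (1 - q1 - q0) * (k + c)) < 1 := by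
  rintro q1 ⟨hq1, hq1'⟩ q0 ⟨hq0, hq0'⟩
  have hm : 0 < k + c := add_pos hk hc
  have hlow : q0 * (k + c) / ((1 - q1) * (1 - k - c) + q0 * (k + c)) = low (k + c) q1 q0 := by
    rw [low, sub_sub]
  rw [hlow, ← high]
  exact ⟨low_pos hm hkc (by linarith) hq0, low_lt_high hm hkc hq1 hq0 (by linarith),
    high_lt_one hm.le hkc hq1 (by linarith)⟩
end

section
/- (Proposition 2, screening effect) The minimal type in the managerial pool θ1(q1,q0) is strictly increasing in the noisiness of the signal: for all q1, q0 ∈ (0, 1/2], the partial derivative of θ1 with respect to q1 is strictly positive and the partial derivative of θ1 with respect to q0 is strictly positive. -/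
/-!
Both partial maps are linear fractional functions `x ↦ (a x + b) / (c x + d)`, whose derivative
`(a d - b c) / (c x + d)²` has the sign of the determinant `a d - b c`. For `θ1` as a function of `q1`
the determinant is `q0 (k + c) (1 - k - c)`, as a function of `q0` it is `(k + c) (1 - q1) (1 - k - c)`;
both are positive, and the common denominator `(1 - q1)(1 - k - c) + q0 (k + c)` does not vanish.
-/

theorem hasDerivAt_linearFractional (a b c d x : ℝ) (h : c * x + d ≠ 0) :
    HasDerivAt (fun x => (a * x + b) / (c * x + d)) ((a * d - b * c) / (c * x + d) ^ 2) x := by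
  have hnum : HasDerivAt (fun x => a * x + b) a x := by
    simpa using ((hasDerivAt_id x).const_mul a).add_const b
  have hden : HasDerivAt (fun x => c * x + d) c x := by
    simpa using ((hasDerivAt_id x).const_mul c).add_const d
  exact (hnum.div hden h).congr_deriv (by ring)

theorem deriv_linearFractional_pos {a b c d x : ℝ} (h : c * x + d ≠ 0) (hdet : b * c < a * d) :
    0 < deriv (fun x => (a * x + b) / (c * x + d)) x := by
  rw [(hasDerivAt_linearFractional a b c d x h).deriv]
  exact div_pos (sub_pos.mpr hdet) (sq_pos_of_ne_zero h)

/-- Proposition 2 (screening effect): the minimal type in the managerial pool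
`θ1(q1,q0) = q0(k+c)/((1−q1)(1−k−c)+q0(k+c))` is strictly increasing in the noisiness of
the signal: for all `q1, q0 ∈ (0, 1/2]`, both partial derivatives are strictly positive. -/
theorem stmt_4 (k c : ℝ) (hk : 0 < k) (hc : 0 < c) (hkc : k + c < 1) :
    ∀ q1 ∈ Set.Ioc (0 : ℝ) (1/2), ∀ q0 ∈ Set.Ioc (0 : ℝ) (1/2),
      0 < deriv (fun x : ℝ => q0 * (k + c) / ((1 - x) * (1 - k - c) + q0 * (k + c))) q1 ∧
      0 < deriv (fun x : ℝ => x * (k + c) / ((1 - q1) * (1 - k - c) + x * (k + c))) q0 := by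
  rintro q1 ⟨-, hq1⟩ q0 ⟨hq0, -⟩
  have hs : 0 < k + c := by linarith
  have hB : 0 < 1 - k - c := by linarith
  have hA : 0 < (1 - q1) * (1 - k - c) := mul_pos (by linarith) hB
  have hden : (1 - q1) * (1 - k - c) + q0 * (k + c) ≠ 0 := by positivity
  constructor
  · have hθ : (fun x : ℝ => q0 * (k + c) / ((1 - x) * (1 - k - c) + q0 * (k + c))) =
        fun x => (0 * x + q0 * (k + c)) / (-(1 - k - c) * x + (1 - k - c + q0 * (k + c))) := by
      funext x; ring_nf
    rw [hθ]
    exact deriv_linearFractional_pos (by convert hden using 1; ring)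
      (by nlinarith [mul_pos (mul_pos hq0 hs) hB])
  · have hθ : (fun x : ℝ => x * (k + c) / ((1 - q1) * (1 - k - c) + x * (k + c))) =
        fun x => ((k + c) * x + 0) / ((k + c) * x + (1 - q1) * (1 - k - c)) := by
      funext x; ring_nf
    rw [hθ]
    exact deriv_linearFractional_pos (by convert hden using 1; ring)
      (by nlinarith [mul_pos hs hA])
end

section
/- (Proposition 3, part 1) In the conservatism parameterization, the minimal type in the managerial pool is strictly increasing in the noisiness of the signal: for all real q, λ with 0 ≤ λ < q < 1/2, the partial derivative of θ1(q,λ) = (q−λ)(k+c)/((1−q−λ)(1−k−c)+(q−λ)(k+c)) with respect to q is strictly positive. -/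
theorem hasDerivAt_cutoff (a b lam q : ℝ)
    (hD : (1 - q - lam) * b + (q - lam) * a ≠ 0) :
    HasDerivAt (fun x : ℝ => (x - lam) * a / ((1 - x - lam) * b + (x - lam) * a))
      (a * b * (1 - 2 * lam) / ((1 - q - lam) * b + (q - lam) * a) ^ 2) q := by
  have hNum : HasDerivAt (fun x : ℝ => (x - lam) * a) a q := by
    simpa using ((hasDerivAt_id q).sub_const lam).mul_const a
  have hDen : HasDerivAt (fun x : ℝ => (1 - x - lam) * b + (x - lam) * a) (a - b) q := by
    have hLeft : HasDerivAt (fun x : ℝ => (1 - x - lam) * b) (-b) q := by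
      simpa using (((hasDerivAt_id q).const_sub 1).sub_const lam).mul_const b
    exact (hLeft.add hNum).congr_deriv (by ring)
  exact (hNum.div hDen hD).congr_deriv (by ring)

/-- Proposition 3, part 1: in the conservatism parameterization, the minimal type in the
managerial pool `θ1(q,λ) = (q−λ)(k+c)/((1−q−λ)(1−k−c)+(q−λ)(k+c))` is strictly increasing
in the noisiness `q` of the signal, for all `0 ≤ λ < q < 1/2`. -/
theorem stmt_5 (k c : ℝ) (hk : 0 < k) (hc : 0 < c) (hkc : k + c < 1) :
    ∀ q lam : ℝ, 0 ≤ lam → lam < q → q < 1/2 →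
      0 < deriv (fun x : ℝ =>
        (x - lam) * (k + c) / ((1 - x - lam) * (1 - k - c) + (x - lam) * (k + c))) q := by
  intro q lam _ hlq hq
  have hkc_pos : 0 < k + c := add_pos hk hc
  have hD : 0 < (1 - q - lam) * (1 - k - c) + (q - lam) * (k + c) :=
    add_pos (mul_pos (by linarith) (by linarith)) (mul_pos (by linarith) hkc_pos)
  rw [(hasDerivAt_cutoff (k + c) (1 - k - c) lam q hD.ne').deriv]
  exact div_pos (mul_pos (mul_pos hkc_pos (by linarith)) (by linarith)) (pow_pos hD 2)
end

section
/- (Proposition 3, part 2) In the conservatism parameterization, the minimal type in the managerial pool is strictly decreasing in accounting conservatism: for all real q, λ with 0 ≤ λ < q < 1/2, the partial derivative of θ1(q,λ) = (q−λ)(k+c)/((1−q−λ)(1−k−c)+(q−λ)(k+c)) with respect to λ is strictly negative. -/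
/-!
Writing `D` for the denominator, `θ₁ = (q - λ)(k + c) / D` with `∂D/∂λ = -1`, so the quotient rule
gives `∂θ₁/∂λ = (k + c)(1 - k - c)(2q - 1) / D²`, whose numerator is negative exactly when
`q < 1/2`.
-/

noncomputable def lowerCutoff (k c q lam : ℝ) : ℝ :=
  (q - lam) * (k + c) / ((1 - q - lam) * (1 - k - c) + (q - lam) * (k + c))

theorem hasDerivAt_lowerCutoff (k c q lam : ℝ)
    (hD : (1 - q - lam) * (1 - k - c) + (q - lam) * (k + c) ≠ 0) :
    HasDerivAt (lowerCutoff k c q)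
      ((k + c) * (1 - k - c) * (2 * q - 1) /
        ((1 - q - lam) * (1 - k - c) + (q - lam) * (k + c)) ^ 2) lam := by
  have hnum : HasDerivAt (fun x : ℝ => (q - x) * (k + c)) (-1 * (k + c)) lam :=
    ((hasDerivAt_id lam).const_sub q).mul_const (k + c)
  have hden : HasDerivAt (fun x : ℝ => (1 - q - x) * (1 - k - c) + (q - x) * (k + c))
      (-1 * (1 - k - c) + -1 * (k + c)) lam :=
    (((hasDerivAt_id lam).const_sub (1 - q)).mul_const (1 - k - c)).add
      (((hasDerivAt_id lam).const_sub q).mul_const (k + c))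
  exact (hnum.div hden hD).congr_deriv (by ring)

theorem lowerCutoff_denom_pos {k c q lam : ℝ} (hkc₀ : 0 ≤ k + c) (hkc : k + c < 1)
    (hlq : lam < q) (hq : q < 1 / 2) :
    0 < (1 - q - lam) * (1 - k - c) + (q - lam) * (k + c) := by
  have h₁ : 0 < (1 - q - lam) * (1 - k - c) := mul_pos (by linarith) (by linarith)
  have h₂ : 0 ≤ (q - lam) * (k + c) := mul_nonneg (by linarith) hkc₀
  linarith

theorem deriv_lowerCutoff_neg {k c q lam : ℝ} (hkc₀ : 0 < k + c) (hkc : k + c < 1)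
    (hlq : lam < q) (hq : q < 1 / 2) :
    deriv (lowerCutoff k c q) lam < 0 := by
  have hD := lowerCutoff_denom_pos hkc₀.le hkc hlq hq
  rw [(hasDerivAt_lowerCutoff k c q lam hD.ne').deriv]
  have hnum : (k + c) * (1 - k - c) * (2 * q - 1) < 0 :=
    mul_neg_of_pos_of_neg (mul_pos hkc₀ (by linarith)) (by linarith)
  exact div_neg_of_neg_of_pos hnum (pow_pos hD 2)

/-- Proposition 3, part 2: in the conservatism parameterization, the minimal type in the
managerial pool `θ1(q,λ) = (q−λ)(k+c)/((1−q−λ)(1−k−c)+(q−λ)(k+c))` is strictly decreasing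
in accounting conservatism `λ`, for all `0 ≤ λ < q < 1/2`. -/
theorem stmt_6 (k c : ℝ) (hk : 0 < k) (hc : 0 < c) (hkc : k + c < 1) :
    ∀ q lam : ℝ, 0 ≤ lam → lam < q → q < 1/2 →
      deriv (fun x : ℝ =>
        (q - x) * (k + c) / ((1 - q - x) * (1 - k - c) + (q - x) * (k + c))) lam < 0 :=
  fun _ _ _ hlq hq => deriv_lowerCutoff_neg (add_pos hk hc) hkc hlq hq
end

section
/- In the conservatism parameterization, the upper investment cutoff is strictly decreasing in accounting conservatism: for all real q, λ with 0 ≤ λ < q < 1/2, the partial derivative of θ0(q,λ) = (1−q+λ)(k+c)/(q+λ+(1−2q)(k+c)) with respect to λ is strictly negative. -/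
/-! With `m = k + c`, `a = 1 - q` and `b = q + (1 - 2q) m`, the cutoff is the Möbius function
`λ ↦ (a + λ) m / (b + λ)`, whose derivative `m (b - a) / (b + λ)²` has the sign of
`b - a = -(1 - 2q)(1 - m) < 0`. -/

theorem hasDerivAt_add_mul_div_add (a b m x : ℝ) (hx : b + x ≠ 0) :
    HasDerivAt (fun y => (a + y) * m / (b + y)) (m * (b - a) / (b + x) ^ 2) x := by
  have hnum : HasDerivAt (fun y => (a + y) * m) m x := by
    simpa using ((hasDerivAt_id x).const_add a).mul_const m
  have hden : HasDerivAt (fun y => b + y) 1 x := by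
    simpa using (hasDerivAt_id x).const_add b
  refine (hnum.div hden hx).congr_deriv ?_
  ring

theorem deriv_add_mul_div_add_neg {a b m x : ℝ} (hm : 0 < m) (hba : b < a) (hx : b + x ≠ 0) :
    deriv (fun y => (a + y) * m / (b + y)) x < 0 := by
  rw [(hasDerivAt_add_mul_div_add a b m x hx).deriv]
  have hnum : m * (b - a) < 0 := mul_neg_of_pos_of_neg hm (by linarith)
  exact div_neg_of_neg_of_pos hnum (by positivity)

/-- In the conservatism parameterization, the upper investment cutoff
`θ0(q,λ) = (1−q+λ)(k+c)/(q+λ+(1−2q)(k+c))` is strictly decreasing in accounting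
conservatism `λ`, for all `0 ≤ λ < q < 1/2`. -/
theorem stmt_7 (k c : ℝ) (hk : 0 < k) (hc : 0 < c) (hkc : k + c < 1) :
    ∀ q lam : ℝ, 0 ≤ lam → lam < q → q < 1/2 →
      deriv (fun x : ℝ =>
        (1 - q + x) * (k + c) / (q + x + (1 - 2*q) * (k + c))) lam < 0 := by
  intro q lam hlam hlq hq
  have hm : 0 < k + c := add_pos hk hc
  have hdefect : 0 < (1 - 2*q) * (1 - (k + c)) := mul_pos (by linarith) (by linarith)
  have hform : (fun x : ℝ => (1 - q + x) * (k + c) / (q + x + (1 - 2*q) * (k + c))) =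
      fun x => (1 - q + x) * (k + c) / (q + (1 - 2*q) * (k + c) + x) := by
    funext x
    rw [add_right_comm q x]
  rw [hform]
  refine deriv_add_mul_div_add_neg hm (by linarith) ?_
  nlinarith
end

section
/- The firm's per-type profits from the conditional and unconditional investment zones match at the upper cutoff and the unconditional-zone profit is strictly positive above it: v_u(θ0(q1,q0)) = v_c(θ0(q1,q0)) > 0, v_u is strictly increasing, and v_u(θ) > 0 for all θ ∈ [θ0(q1,q0), 1). -/
/-!
Write `s = k + c`. Then `1 - w* = k / s`, so `v_u θ = k (θ - s) / s` is an increasing affine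
function vanishing exactly at `θ = s`, and it suffices to see that the cutoff `θ0` lies above `s`:
clearing the denominator `D = q1 + (1 - q1 - q0) s` this is `(1 - q1 - q0)(1 - s) > 0`. Finally
`v_u θ - v_c θ = k (θ D - (1 - q0) s) / s`, so `θ0` is exactly the type where the two profits agree.
-/

namespace Investment

variable (k c q1 q0 : ℝ)

noncomputable def wStar : ℝ := c / (k + c)

noncomputable def upperCutoff : ℝ := (1 - q0) * (k + c) / (q1 + (1 - q1 - q0) * (k + c))

noncomputable def condProfit (θ : ℝ) : ℝ :=
  θ * (1 - q1) * (1 - wStar k c - k) - (1 - θ) * q0 * k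

noncomputable def uncondProfit (θ : ℝ) : ℝ := θ * (1 - wStar k c) - k

variable {k c q1 q0}

theorem one_sub_wStar (hs : k + c ≠ 0) : 1 - wStar k c = k / (k + c) := by
  rw [wStar, one_sub_div hs, add_sub_cancel_right]

theorem uncondProfit_eq (hs : k + c ≠ 0) (θ : ℝ) :
    uncondProfit k c θ = k * (θ - (k + c)) / (k + c) := by
  rw [uncondProfit, one_sub_wStar hs]
  field_simp

theorem uncondProfit_pos (hk : 0 < k) (hs : 0 < k + c) {θ : ℝ} (hθ : k + c < θ) :
    0 < uncondProfit k c θ := by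
  rw [uncondProfit_eq hs.ne']
  exact div_pos (mul_pos hk (sub_pos.2 hθ)) hs

theorem strictMono_uncondProfit (hk : 0 < k) (hs : 0 < k + c) :
    StrictMono (uncondProfit k c) := by
  have hslope : 0 < 1 - wStar k c := by
    rw [one_sub_wStar hs.ne']
    exact div_pos hk hs
  intro a b hab
  simpa [uncondProfit] using mul_lt_mul_of_pos_right hab hslope

theorem upperCutoff_denom_pos (hq1 : 0 ≤ q1) (hq : q1 + q0 < 1) (hs : 0 < k + c) :
    0 < q1 + (1 - q1 - q0) * (k + c) :=
  add_pos_of_nonneg_of_pos hq1 (mul_pos (by linarith) hs)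

theorem lt_upperCutoff (hq1 : 0 ≤ q1) (hq : q1 + q0 < 1) (hs : 0 < k + c) (hs1 : k + c < 1) :
    k + c < upperCutoff k c q1 q0 := by
  rw [upperCutoff, lt_div_iff₀ (upperCutoff_denom_pos hq1 hq hs)]
  have key : 0 < (1 - q1 - q0) * (1 - (k + c)) * (k + c) :=
    mul_pos (mul_pos (by linarith) (by linarith)) hs
  linarith

theorem uncondProfit_sub_condProfit (hs : k + c ≠ 0) (θ : ℝ) :
    uncondProfit k c θ - condProfit k c q1 q0 θ =
      k * (θ * (q1 + (1 - q1 - q0) * (k + c)) - (1 - q0) * (k + c)) / (k + c) := by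
  rw [uncondProfit, condProfit, wStar]
  field_simp
  ring

theorem uncondProfit_upperCutoff (hq1 : 0 ≤ q1) (hq : q1 + q0 < 1) (hs : 0 < k + c) :
    uncondProfit k c (upperCutoff k c q1 q0) = condProfit k c q1 q0 (upperCutoff k c q1 q0) := by
  rw [← sub_eq_zero, uncondProfit_sub_condProfit hs.ne', upperCutoff,
    div_mul_cancel₀ _ (upperCutoff_denom_pos hq1 hq hs).ne', sub_self, mul_zero, zero_div]

end Investment

open Investment in
/-- The firm's per-type profits from the conditional and unconditional zones match at the
upper cutoff, and the unconditional-zone profit is strictly positive above it: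
`v_u(θ0) = v_c(θ0) > 0`, `v_u` is strictly increasing, and `v_u(θ) > 0` on `[θ0, 1)`. -/
theorem stmt_9 (k c q1 q0 : ℝ)
    (hk : 0 < k) (hc : 0 < c) (hkc : k + c < 1)
    (hq1 : q1 ∈ Set.Ioo (0 : ℝ) (1/2)) (hq0 : q0 ∈ Set.Ioo (0 : ℝ) (1/2)) :
    let wstar : ℝ := c / (k + c)
    let θ0 : ℝ := (1 - q0) * (k + c) / (q1 + (1 - q1 - q0) * (k + c))
    let vc : ℝ → ℝ := fun θ => θ * (1 - q1) * (1 - wstar - k) - (1 - θ) * q0 * k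
    let vu : ℝ → ℝ := fun θ => θ * (1 - wstar) - k
    vu θ0 = vc θ0 ∧ 0 < vu θ0 ∧ StrictMono vu ∧ ∀ θ ∈ Set.Ico θ0 1, 0 < vu θ := by
  intro wstar θ0 vc vu
  have hs : 0 < k + c := by linarith
  have hq1_nonneg : 0 ≤ q1 := hq1.1.le
  have hq : q1 + q0 < 1 := by linarith [hq1.2, hq0.2]
  have hcut : 0 < uncondProfit k c (upperCutoff k c q1 q0) :=
    uncondProfit_pos hk hs (lt_upperCutoff hq1_nonneg hq hs hkc)
  have hmono := strictMono_uncondProfit hk hs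
  refine ⟨uncondProfit_upperCutoff hq1_nonneg hq hs, hcut, hmono, fun θ hθ => ?_⟩
  exact hcut.trans_le (hmono.monotone hθ.1)
end

section
/- The ex ante firm value under a uniform type distribution is strictly positive: V(q1,q0) > 0 for all q1, q0 ∈ (0, 1/2). -/
/-!
With `s = k + c` and `w* = c / s`, both payoffs are positive multiples of `θ` minus a threshold:
`v_c θ = (k / s) D₁ (θ - θ₁)` with `D₁ = (1 - q₁)(1 - s) + q₀ s`, and `v_u θ = (k / s)(θ - s)`.
Since `θ₁ < θ₀`, `s < θ₀` and `θ₀ < 1`, both integrands are positive on the interior of their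
intervals, and `1 - θ₁ > 0`.
-/

theorem integral_mul_sub_pos {α t a b : ℝ} (hα : 0 < α) (hta : t ≤ a) (hab : a < b) :
    0 < ∫ θ in a..b, α * (θ - t) :=
  intervalIntegral.intervalIntegral_pos_of_pos_on
    ((continuous_const.mul (continuous_id.sub continuous_const)).intervalIntegrable a b)
    (fun _ hθ ↦ mul_pos hα (by linarith [hθ.1])) hab

section

variable {k c q1 q0 : ℝ}

theorem collateralized_value_eq (hs : k + c ≠ 0)
    (hD : (1 - q1) * (1 - k - c) + q0 * (k + c) ≠ 0) (θ : ℝ) :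
    θ * (1 - q1) * (1 - c / (k + c) - k) - (1 - θ) * q0 * k
      = k / (k + c) * ((1 - q1) * (1 - k - c) + q0 * (k + c)) *
        (θ - q0 * (k + c) / ((1 - q1) * (1 - k - c) + q0 * (k + c))) := by
  rw [mul_assoc (k / (k + c)), mul_sub _ θ, mul_div_cancel₀ _ hD]
  field_simp
  ring

theorem uncollateralized_value_eq (hs : k + c ≠ 0) (θ : ℝ) :
    θ * (1 - c / (k + c)) - k = k / (k + c) * (θ - (k + c)) := by
  field_simp
  ring

theorem collateralized_denom_pos (hs : 0 < k + c) (hs1 : k + c < 1)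
    (hq1 : q1 < 1) (hq0 : 0 < q0) :
    0 < (1 - q1) * (1 - k - c) + q0 * (k + c) := by
  nlinarith

theorem uncollateralized_denom_pos (hs : 0 < k + c) (hq1 : 0 < q1) (hq : q1 + q0 < 1) :
    0 < q1 + (1 - q1 - q0) * (k + c) := by
  nlinarith

theorem collateralized_threshold_lt_one (hs : 0 < k + c) (hs1 : k + c < 1)
    (hq1 : q1 < 1) (hq0 : 0 < q0) :
    q0 * (k + c) / ((1 - q1) * (1 - k - c) + q0 * (k + c)) < 1 := by
  rw [div_lt_one (collateralized_denom_pos hs hs1 hq1 hq0)]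
  nlinarith

theorem collateralized_threshold_lt_uncollateralized_threshold (hs : 0 < k + c) (hs1 : k + c < 1)
    (hq1 : 0 < q1) (hq0 : 0 < q0) (hq : q1 + q0 < 1) :
    q0 * (k + c) / ((1 - q1) * (1 - k - c) + q0 * (k + c))
      < (1 - q0) * (k + c) / (q1 + (1 - q1 - q0) * (k + c)) := by
  rw [div_lt_div_iff₀ (collateralized_denom_pos hs hs1 (by linarith) hq0)
    (uncollateralized_denom_pos hs hq1 hq)]
  nlinarith [mul_pos (sub_pos.2 hs1) (sub_pos.2 hq)]

theorem lt_uncollateralized_threshold (hs : 0 < k + c) (hs1 : k + c < 1)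
    (hq1 : 0 < q1) (hq : q1 + q0 < 1) :
    k + c < (1 - q0) * (k + c) / (q1 + (1 - q1 - q0) * (k + c)) := by
  rw [lt_div_iff₀ (uncollateralized_denom_pos hs hq1 hq)]
  nlinarith [mul_pos (sub_pos.2 hs1) (sub_pos.2 hq)]

theorem uncollateralized_threshold_lt_one (hs : 0 < k + c) (hs1 : k + c < 1)
    (hq1 : 0 < q1) (hq : q1 + q0 < 1) :
    (1 - q0) * (k + c) / (q1 + (1 - q1 - q0) * (k + c)) < 1 := by
  rw [div_lt_one (uncollateralized_denom_pos hs hq1 hq)]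
  nlinarith

end

/-- The ex ante firm value under a uniform type distribution is strictly positive:
`V(q1,q0) > 0` for all `q1, q0 ∈ (0, 1/2)`. -/
theorem stmt_10 (k c q1 q0 : ℝ)
    (hk : 0 < k) (hc : 0 < c) (hkc : k + c < 1)
    (hq1 : q1 ∈ Set.Ioo (0 : ℝ) (1/2)) (hq0 : q0 ∈ Set.Ioo (0 : ℝ) (1/2)) :
    let wstar : ℝ := c / (k + c)
    let θ1 : ℝ := q0 * (k + c) / ((1 - q1) * (1 - k - c) + q0 * (k + c))
    let θ0 : ℝ := (1 - q0) * (k + c) / (q1 + (1 - q1 - q0) * (k + c))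
    0 < (1 / (1 - θ1)) *
      ((∫ θ in θ1..θ0, (θ * (1 - q1) * (1 - wstar - k) - (1 - θ) * q0 * k)) +
       (∫ θ in θ0..(1:ℝ), (θ * (1 - wstar) - k))) := by
  intro wstar θ1 θ0
  obtain ⟨hq1, hq1'⟩ := hq1
  obtain ⟨hq0, hq0'⟩ := hq0
  have hs : 0 < k + c := add_pos hk hc
  have hq : q1 + q0 < 1 := by linarith
  have hD := collateralized_denom_pos hs hkc (by linarith : q1 < 1) hq0
  have hθ1 : θ1 < 1 := collateralized_threshold_lt_one hs hkc (by linarith) hq0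
  have hθ1θ0 : θ1 < θ0 := collateralized_threshold_lt_uncollateralized_threshold hs hkc hq1 hq0 hq
  have hsθ0 : k + c < θ0 := lt_uncollateralized_threshold hs hkc hq1 hq
  have hθ0 : θ0 < 1 := uncollateralized_threshold_lt_one hs hkc hq1 hq
  simp only [wstar, collateralized_value_eq hs.ne' hD.ne', uncollateralized_value_eq hs.ne']
  exact mul_pos (one_div_pos.2 (sub_pos.2 hθ1))
    (add_pos (integral_mul_sub_pos (mul_pos (div_pos hk hs) hD) le_rfl hθ1θ0)
      (integral_mul_sub_pos (div_pos hk hs) hsθ0.le hθ0))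
end

section
/- (Equilibrium managerial rent, Proposition 1(iii)) The equilibrium rent function R, defined piecewise by R(θ) = 0 for θ ∈ (0, θ1], R(θ) = θ(1−q1)(w*−c) − (1−θ)q0·c for θ ∈ (θ1, θ0], and R(θ) = θ·w* − c for θ ∈ (θ0, 1), is continuous on (0,1), nondecreasing, strictly increasing on (θ1, 1), and satisfies R(θ) > 0 if and only if θ > θ1. Hence the managerial pool {θ ∈ (0,1) : R(θ) > 0} equals {θ ∈ (0,1) : θ > θ1}. -/
/-!
On all of `ℝ`, `R` is the upper envelope of the three affine functions `0`,
`θ ↦ mθ − q0·c` (the middle piece, with `m = (1−q1)(w*−c) + q0·c`) and `θ ↦ w*θ − c`.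
Their slopes satisfy `0 < m ≤ w*`, and consecutive pieces cross exactly at `θ1` and at `θ0`,
with `θ1 ≤ θ0` because `(1−q0)·s·D1 − q0·s·D0 = s(1−s)(1−q0−q1)` for `s = k+c` and the two
denominators `D1, D0`. An envelope of nondecreasing affine functions is continuous and
monotone, and above `θ1` the strictly increasing middle piece is already positive.
-/

section ThreePieces

variable {α β : Type*} [LinearOrder α] [LinearOrder β] [AddCommGroup β] [IsOrderedAddMonoid β]
  {f g : α → β} {a x : α}

theorem le_of_monotone_sub_of_le (hgf : Monotone (g - f)) (ha : g a = f a) (hx : x ≤ a) :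
    g x ≤ f x := by
  simpa [ha] using hgf hx

theorem le_of_monotone_sub_of_ge (hgf : Monotone (g - f)) (ha : g a = f a) (hx : a ≤ x) :
    f x ≤ g x := by
  simpa [ha] using hgf hx

theorem ite_ite_eq_max_max {h : α → β} {b : α} (hab : a ≤ b) (hgf : Monotone (g - f))
    (hhg : Monotone (h - g)) (ha : g a = f a) (hb : h b = g b) (x : α) :
    (if x ≤ a then f x else if x ≤ b then g x else h x) = max (max (f x) (g x)) (h x) := by
  split_ifs with hxa hxb
  · have hgx := le_of_monotone_sub_of_le hgf ha hxa
    have hhx := le_of_monotone_sub_of_le hhg hb (hxa.trans hab)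
    rw [max_eq_left hgx, max_eq_left (hhx.trans hgx)]
  · have hfx := le_of_monotone_sub_of_ge hgf ha (le_of_not_ge hxa)
    rw [max_eq_right hfx, max_eq_left (le_of_monotone_sub_of_le hhg hb hxb)]
  · have hfx := le_of_monotone_sub_of_ge hgf ha (hab.trans (le_of_not_ge hxb))
    rw [max_eq_right hfx, max_eq_right (le_of_monotone_sub_of_ge hhg hb (le_of_not_ge hxb))]

end ThreePieces

section Rent

variable {k c q1 q0 : ℝ}

theorem strictMono_middleRent {w : ℝ} (hm : 0 < (1 - q1) * (w - c) + q0 * c) :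
    StrictMono fun θ : ℝ => θ * (1 - q1) * (w - c) - (1 - θ) * q0 * c := by
  intro x y hxy
  nlinarith [mul_pos (sub_pos.2 hxy) hm]

theorem monotone_topRent_sub_middleRent {w : ℝ} (hm : (1 - q1) * (w - c) + q0 * c ≤ w) :
    Monotone ((fun θ : ℝ => θ * w - c) - fun θ => θ * (1 - q1) * (w - c) - (1 - θ) * q0 * c) := by
  intro x y hxy
  simp only [Pi.sub_apply]
  nlinarith [mul_nonneg (sub_nonneg.2 hxy) (sub_nonneg.2 hm)]

theorem middleRent_slope_pos (hc : 0 < c) (hs : 0 < k + c) (hs1 : k + c < 1) (hq1 : q1 < 1)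
    (hq0 : 0 ≤ q0) : 0 < (1 - q1) * (c / (k + c) - c) + q0 * c := by
  have : c < c / (k + c) := by
    rw [lt_div_iff₀ hs]
    nlinarith
  have : 0 < (1 - q1) * (c / (k + c) - c) := by apply mul_pos <;> linarith
  nlinarith

theorem middleRent_slope_le_wage (hc : 0 < c) (hs : 0 < k + c) (hq1 : 0 ≤ q1)
    (hq : q0 + q1 ≤ 1) : (1 - q1) * (c / (k + c) - c) + q0 * c ≤ c / (k + c) := by
  have : 0 ≤ q1 * (c / (k + c)) := by positivity
  nlinarith

theorem middleRent_at_lower_threshold (hs : 0 < k + c)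
    (hD : 0 < (1 - q1) * (1 - k - c) + q0 * (k + c)) :
    let θ1 := q0 * (k + c) / ((1 - q1) * (1 - k - c) + q0 * (k + c))
    θ1 * (1 - q1) * (c / (k + c) - c) - (1 - θ1) * q0 * c = 0 := by
  field_simp
  ring

theorem middleRent_at_upper_threshold (hs : 0 < k + c)
    (hD : 0 < q1 + (1 - q1 - q0) * (k + c)) :
    let θ0 := (1 - q0) * (k + c) / (q1 + (1 - q1 - q0) * (k + c))
    θ0 * (c / (k + c)) - c = θ0 * (1 - q1) * (c / (k + c) - c) - (1 - θ0) * q0 * c := by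
  intro θ0
  have hθ0 : θ0 * (q1 + (1 - q1 - q0) * (k + c)) = (1 - q0) * (k + c) := div_mul_cancel₀ _ hD.ne'
  field_simp
  linear_combination c * hθ0

theorem lower_threshold_le_upper (hs : 0 < k + c) (hs1 : k + c < 1) (hq : q0 + q1 < 1)
    (hD1 : 0 < (1 - q1) * (1 - k - c) + q0 * (k + c))
    (hD0 : 0 < q1 + (1 - q1 - q0) * (k + c)) :
    q0 * (k + c) / ((1 - q1) * (1 - k - c) + q0 * (k + c)) ≤
      (1 - q0) * (k + c) / (q1 + (1 - q1 - q0) * (k + c)) := by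
  rw [div_le_div_iff₀ hD1 hD0]
  nlinarith [mul_pos (sub_pos.2 hs1) (sub_pos.2 hq), mul_pos hs (mul_pos (sub_pos.2 hs1) (sub_pos.2 hq))]

end Rent

/-- Proposition 1(iii): the equilibrium rent function `R`, defined piecewise (zero on
`(0, θ1]`, `θ(1−q1)(w*−c) − (1−θ)q0·c` on `(θ1, θ0]`, and `θ·w* − c` on `(θ0, 1)`), is
continuous on `(0,1)`, nondecreasing on `(0,1)`, strictly increasing on `(θ1, 1)`, and
positive exactly above `θ1`; hence the managerial pool equals `{θ ∈ (0,1) : θ > θ1}`. -/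
theorem stmt_13 (k c q1 q0 : ℝ)
    (hk : 0 < k) (hc : 0 < c) (hkc : k + c < 1)
    (hq1 : q1 ∈ Set.Ioo (0 : ℝ) (1/2)) (hq0 : q0 ∈ Set.Ioo (0 : ℝ) (1/2)) :
    let wstar : ℝ := c / (k + c)
    let θ1 : ℝ := q0 * (k + c) / ((1 - q1) * (1 - k - c) + q0 * (k + c))
    let θ0 : ℝ := (1 - q0) * (k + c) / (q1 + (1 - q1 - q0) * (k + c))
    let R : ℝ → ℝ := fun θ =>
      if θ ≤ θ1 then 0
      else if θ ≤ θ0 then θ * (1 - q1) * (wstar - c) - (1 - θ) * q0 * c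
      else θ * wstar - c
    ContinuousOn R (Set.Ioo 0 1) ∧
    MonotoneOn R (Set.Ioo 0 1) ∧
    StrictMonoOn R (Set.Ioo θ1 1) ∧
    (∀ θ ∈ Set.Ioo (0 : ℝ) 1, 0 < R θ ↔ θ1 < θ) ∧
    {θ ∈ Set.Ioo (0 : ℝ) 1 | 0 < R θ} = {θ ∈ Set.Ioo (0 : ℝ) 1 | θ1 < θ} := by
  intro wstar θ1 θ0 R
  obtain ⟨hq1, hq1'⟩ := hq1
  obtain ⟨hq0, hq0'⟩ := hq0
  have hs : 0 < k + c := by linarith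
  have hD1 : 0 < (1 - q1) * (1 - k - c) + q0 * (k + c) := by nlinarith
  have hD0 : 0 < q1 + (1 - q1 - q0) * (k + c) := by nlinarith
  have hw : 0 < wstar := by positivity
  set g : ℝ → ℝ := fun θ => θ * (1 - q1) * (wstar - c) - (1 - θ) * q0 * c
  have hg : StrictMono g := strictMono_middleRent (middleRent_slope_pos hc hs hkc (by linarith) hq0.le)
  have hgθ1 : g θ1 = 0 := middleRent_at_lower_threshold hs hD1
  have hg_pos : ∀ θ, θ1 < θ → 0 < g θ := fun θ h => hgθ1 ▸ hg h
  have hR : ∀ θ, R θ = max (max 0 (g θ)) (θ * wstar - c) :=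
    ite_ite_eq_max_max (f := 0) (lower_threshold_le_upper hs hkc (by linarith) hD1 hD0)
      (by simpa using hg.monotone)
      (monotone_topRent_sub_middleRent (middleRent_slope_le_wage hc hs hq1.le (by linarith)))
      hgθ1 (middleRent_at_upper_threshold hs hD0)
  have hR_pos : ∀ θ, 0 < R θ ↔ θ1 < θ := fun θ =>
    ⟨fun h => lt_of_not_ge fun hle => h.ne' (if_pos hle),
      fun h => hR θ ▸ (hg_pos θ h).trans_le ((le_max_right _ _).trans (le_max_left _ _))⟩
  have hR_mono : Monotone R := fun x y hxy => by
    rw [hR, hR]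
    gcongr
    exact hg.monotone hxy
  refine ⟨?_, hR_mono.monotoneOn _, ?_, fun θ _ => hR_pos θ,
    Set.ext fun θ => and_congr_right fun _ => hR_pos θ⟩
  · exact (Continuous.continuousOn (by fun_prop)).congr fun θ _ => hR θ
  · intro x hx y _ hxy
    rw [hR, hR, max_eq_right (hg_pos x hx.1).le, max_eq_right (hg_pos y (hx.1.trans hxy)).le]
    exact max_lt_max (hg hxy) (by gcongr)
end

section
/- (Key step of Proposition 6) For all q1, q0 ∈ (0, 1/2): 1/θ0(q1,q0) − 1 = (1−k−c)·q1/((k+c)(1−q0)), (1−θ1(q1,q0))·q0/(θ1(q1,q0)·(1−q1)) = (1−k−c)/(k+c), and (1−k−c)·q1/((k+c)(1−q0)) < (1−k−c)/(k+c). Consequently, max{c/θ0(q1,q0), (1 + (1−θ1(q1,q0))·q0/(θ1(q1,q0)·(1−q1)))·c} = c/(k+c), so if b ≥ 0 and the wage w = (c−b)/(k+c) satisfies w ≥ (1 + (1−θ1)·q0/(θ1·(1−q1)))·c, then b = 0. -/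
/-!
Write `s = k + c`. Clearing denominators, `1/θ₀ - 1 = (1 - s) q₁ / (s (1 - q₀))` and the odds
ratio `(1 - θ₁) q₀ / (θ₁ (1 - q₁))` equals `(1 - s)/s`, independently of the signal precisions.
Since `q₁ + q₀ < 1`, the first is smaller than the second, so `c/θ₀ < c/s` and the maximum is
`(1 + (1 - s)/s) c = c/s`. A wage `(c - b)/s ≥ c/s` then forces `b ≤ 0`.
-/

/-- The cutoff `θ₁`, written in terms of the total cost `s = k + c`. -/
noncomputable def cutoff₁ (s q₁ q₀ : ℝ) : ℝ := q₀ * s / ((1 - q₁) * (1 - s) + q₀ * s)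

/-- The cutoff `θ₀`, written in terms of the total cost `s = k + c`. -/
noncomputable def cutoff₀ (s q₁ q₀ : ℝ) : ℝ := (1 - q₀) * s / (q₁ + (1 - q₁ - q₀) * s)

section Cutoffs

variable {s q₁ q₀ : ℝ}

theorem one_div_cutoff₀_sub_one (hs : s ≠ 0) (hq₀ : q₀ ≠ 1) :
    1 / cutoff₀ s q₁ q₀ - 1 = (1 - s) * q₁ / (s * (1 - q₀)) := by
  have hq₀' : 1 - q₀ ≠ 0 := sub_ne_zero.mpr hq₀.symm
  rw [cutoff₀, one_div_div]
  field_simp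
  ring

theorem cutoff₁_odds (hs₀ : 0 < s) (hs₁ : s < 1) (hq₀ : 0 < q₀) (hq₁ : q₁ < 1) :
    (1 - cutoff₁ s q₁ q₀) * q₀ / (cutoff₁ s q₁ q₀ * (1 - q₁)) = (1 - s) / s := by
  have hD : 0 < (1 - q₁) * (1 - s) + q₀ * s := by
    have := mul_pos (sub_pos.mpr hq₁) (sub_pos.mpr hs₁)
    positivity
  have hq₁' : 1 - q₁ ≠ 0 := (sub_pos.mpr hq₁).ne'
  rw [cutoff₁]
  field_simp
  ring

theorem odds_lt_of_add_lt_one (hs₀ : 0 < s) (hs₁ : s < 1) (hq₀ : q₀ < 1) (h : q₁ + q₀ < 1) :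
    (1 - s) * q₁ / (s * (1 - q₀)) < (1 - s) / s := by
  rw [mul_comm s, ← div_div, mul_div_assoc]
  refine div_lt_div_of_pos_right ?_ hs₀
  refine mul_lt_of_lt_one_right (sub_pos.mpr hs₁) ?_
  rw [div_lt_one (sub_pos.mpr hq₀)]
  linarith

theorem div_cutoff₀_le {c : ℝ} (hc : 0 ≤ c) (hs₀ : 0 < s) (hs₁ : s < 1) (hq₀ : q₀ < 1)
    (h : q₁ + q₀ < 1) : c / cutoff₀ s q₁ q₀ ≤ c / s := by
  have key := one_div_cutoff₀_sub_one (q₁ := q₁) hs₀.ne' hq₀.ne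
  calc c / cutoff₀ s q₁ q₀ = c * (1 + (1 - s) * q₁ / (s * (1 - q₀))) := by
        rw [← key, div_eq_mul_one_div]; ring
    _ ≤ c * (1 + (1 - s) / s) := by
        gcongr c * (1 + ?_)
        exact (odds_lt_of_add_lt_one hs₀ hs₁ hq₀ h).le
    _ = c / s := by field_simp; ring

end Cutoffs

/-- Key step of Proposition 6 (moral-hazard extension): identities and inequality for the
investment cutoffs, the resulting maximum `max{c/θ0, (1 + (1−θ1)q0/(θ1(1−q1)))·c} = c/(k+c)`,
and the consequence that a payment `b ≥ 0` upon investment with wage `w = (c−b)/(k+c)`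
satisfying the effort incentive constraint must be `b = 0`. -/
theorem stmt_17 (k c q1 q0 : ℝ)
    (hk : 0 < k) (hc : 0 < c) (hkc : k + c < 1)
    (hq1 : q1 ∈ Set.Ioo (0 : ℝ) (1/2)) (hq0 : q0 ∈ Set.Ioo (0 : ℝ) (1/2)) :
    let θ1 : ℝ := q0 * (k + c) / ((1 - q1) * (1 - k - c) + q0 * (k + c))
    let θ0 : ℝ := (1 - q0) * (k + c) / (q1 + (1 - q1 - q0) * (k + c))
    1 / θ0 - 1 = (1 - k - c) * q1 / ((k + c) * (1 - q0)) ∧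
    (1 - θ1) * q0 / (θ1 * (1 - q1)) = (1 - k - c) / (k + c) ∧
    (1 - k - c) * q1 / ((k + c) * (1 - q0)) < (1 - k - c) / (k + c) ∧
    max (c / θ0) ((1 + (1 - θ1) * q0 / (θ1 * (1 - q1))) * c) = c / (k + c) ∧
    (∀ b : ℝ, 0 ≤ b →
      (1 + (1 - θ1) * q0 / (θ1 * (1 - q1))) * c ≤ (c - b) / (k + c) → b = 0) := by
  obtain ⟨-, hq1₁⟩ := hq1
  obtain ⟨hq0₀, hq0₁⟩ := hq0
  have hs : 0 < k + c := by positivity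
  have hq0 : q0 < 1 := by linarith
  have hsum : q1 + q0 < 1 := by linarith
  rw [sub_sub 1 k c]
  intro θ1 θ0
  have hodds : (1 - θ1) * q0 / (θ1 * (1 - q1)) = (1 - (k + c)) / (k + c) :=
    cutoff₁_odds hs hkc hq0₀ (by linarith)
  have hwage : (1 + (1 - θ1) * q0 / (θ1 * (1 - q1))) * c = c / (k + c) := by
    rw [hodds]; field_simp; ring
  refine ⟨one_div_cutoff₀_sub_one hs.ne' hq0.ne, hodds,
    odds_lt_of_add_lt_one hs hkc hq0 hsum, ?_, fun b hb hle => ?_⟩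
  · rw [hwage]
    exact max_eq_right (div_cutoff₀_le hc.le hs hkc hq0 hsum)
  · rw [hwage, div_le_div_iff_of_pos_right hs] at hle
    linarith
end

section
/- (Commitment benchmark dominates screening) For all q1, q0 ∈ (0, 1/2), the with-commitment screening cutoff θ_commit = c/w* = k + c strictly exceeds the no-commitment cutoff: θ1(q1,q0) < k + c. -/
/-! With `s = k + c ∈ (0, 1)`, clearing the positive denominator turns `θ₁ < s` into
`q₀ (1 - s) s < (1 - q₁)(1 - s) s`, i.e. `q₀ < 1 - q₁`, which holds since `q₀, q₁ < 1/2`. -/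

lemma mul_div_mul_one_sub_add_lt {a b s : ℝ} (ha : 0 ≤ a) (hab : a < b) (hs₀ : 0 < s) (hs₁ : s < 1) :
    a * s / (b * (1 - s) + a * s) < s := by
  have hden : 0 < b * (1 - s) + a * s :=
    add_pos_of_pos_of_nonneg (mul_pos (ha.trans_lt hab) (sub_pos.2 hs₁)) (mul_nonneg ha hs₀.le)
  rw [div_lt_iff₀ hden]
  nlinarith [mul_pos (mul_pos hs₀ (sub_pos.2 hs₁)) (sub_pos.2 hab)]

/-- Commitment benchmark dominates screening: for all `q1, q0 ∈ (0, 1/2)`, the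
with-commitment screening cutoff `θ_commit = c/w* = k + c` strictly exceeds the
no-commitment cutoff `θ1(q1,q0)`. -/
theorem stmt_18 (k c : ℝ) (hk : 0 < k) (hc : 0 < c) (hkc : k + c < 1) :
    c / (c / (k + c)) = k + c ∧
    ∀ q1 ∈ Set.Ioo (0 : ℝ) (1/2), ∀ q0 ∈ Set.Ioo (0 : ℝ) (1/2),
      q0 * (k + c) / ((1 - q1) * (1 - k - c) + q0 * (k + c)) < k + c := by
  refine ⟨div_div_cancel₀ hc.ne', ?_⟩
  rintro q1 ⟨-, hq1⟩ q0 ⟨hq0, hq0'⟩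
  rw [sub_sub]
  exact mul_div_mul_one_sub_add_lt hq0.le (by linarith) (by linarith) hkc
end
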